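/- Let Q ∈ ℍ^{N₁×N₂} have a QSVD Q = U Λ Vᴴ with U, V unitary quaternion matrices and Λ ∈ ℝ^{N₁×N₂} rectangular diagonal with nonnegative diagonal entries σ₁, …, σ_{min(N₁,N₂)} (extended by zeros to length N₂ if N₂ > N₁). Then the multiset of eigenvalues, counted with multiplicity, of the Hermitian positive semidefinite complex matrix f(Q)ᴴ f(Q) ∈ ℂ^{2N₂×2N₂} consists exactly of the values σ_k², k = 1, …, N₂, each appearing twice. In particular, each singular value of Q appears as a singular value of f(Q) with multiplicity two. -/

import Mathlib

open Matrix

noncomputable section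

/-- The two complex components of the Cayley–Dickson form of a quaternion. -/
def qC1 (q : Quaternion ℝ) : ℂ := ⟨q.re, q.imI⟩
def qC2 (q : Quaternion ℝ) : ℂ := ⟨q.imJ, q.imK⟩

/-- The isomorphic complex representation `f` of a quaternion matrix:
`f(Q) = [[Z₁, Z₂], [−Z₂*, Z₁*]]` with `Z₁ = Q₀ + Q₁ i`, `Z₂ = Q₂ + Q₃ i`. -/
def qf {N₁ N₂ : ℕ} (Q : Matrix (Fin N₁) (Fin N₂) (Quaternion ℝ)) :
    Matrix (Fin N₁ ⊕ Fin N₁) (Fin N₂ ⊕ Fin N₂) ℂ :=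
  Matrix.fromBlocks (Matrix.of fun m n => qC1 (Q m n)) (Matrix.of fun m n => qC2 (Q m n))
    (Matrix.of fun m n => -star (qC2 (Q m n))) (Matrix.of fun m n => star (qC1 (Q m n)))

/-- A square quaternion matrix is unitary if `U Uᴴ = Uᴴ U = I`. -/
def qUnitary {N : ℕ} (U : Matrix (Fin N) (Fin N) (Quaternion ℝ)) : Prop :=
  U * Uᴴ = 1 ∧ Uᴴ * U = 1

/-- A rectangular real matrix is "rectangular diagonal with nonnegative diagonal entries". -/
def recDiagNonneg {N₁ N₂ : ℕ} (Λ : Matrix (Fin N₁) (Fin N₂) ℝ) : Prop :=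
  (∀ (m : Fin N₁) (n : Fin N₂), (m : ℕ) ≠ (n : ℕ) → Λ m n = 0) ∧ ∀ m n, 0 ≤ Λ m n

/-- View a real matrix as a quaternion matrix. -/
def rToQ {N₁ N₂ : ℕ} (Λ : Matrix (Fin N₁) (Fin N₂) ℝ) :
    Matrix (Fin N₁) (Fin N₂) (Quaternion ℝ) :=
  Λ.map (algebraMap ℝ (Quaternion ℝ))

/-- `IsQSVD Q U Λ V` : `Q = U Λ Vᴴ` is a quaternion singular value decomposition. -/
def IsQSVD {N₁ N₂ : ℕ} (Q : Matrix (Fin N₁) (Fin N₂) (Quaternion ℝ))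
    (U : Matrix (Fin N₁) (Fin N₁) (Quaternion ℝ))
    (Λ : Matrix (Fin N₁) (Fin N₂) ℝ)
    (V : Matrix (Fin N₂) (Fin N₂) (Quaternion ℝ)) : Prop :=
  qUnitary U ∧ qUnitary V ∧ recDiagNonneg Λ ∧ Q = U * rToQ Λ * Vᴴ

/-- The quaternion nuclear norm: `½ Σ_j sqrt(λ_j)`, `λ_j` the eigenvalues of `f(X)ᴴ f(X)`. -/
noncomputable def qNuclearNorm {N₁ N₂ : ℕ}
    (X : Matrix (Fin N₁) (Fin N₂) (Quaternion ℝ)) : ℝ :=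
  (1 / 2) * ∑ j, Real.sqrt ((Matrix.isHermitian_conjTranspose_mul_self (qf X)).eigenvalues j)

/-- The quaternion Frobenius norm. -/
noncomputable def qFrob {M N : ℕ} (X : Matrix (Fin M) (Fin N) (Quaternion ℝ)) : ℝ :=
  Real.sqrt (∑ m, ∑ n, ‖X m n‖ ^ 2)

/-- The spectral norm of a quaternion matrix: the square root of the largest eigenvalue
of `f(E)ᴴ f(E)`. -/
noncomputable def qSpectralNorm {N₁ N₂ : ℕ}
    (E : Matrix (Fin N₁) (Fin N₂) (Quaternion ℝ)) : ℝ :=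
  ⨆ j, Real.sqrt ((Matrix.isHermitian_conjTranspose_mul_self (qf E)).eigenvalues j)

/-!
Under `f`, quaternion multiplication and conjugate transposition become complex matrix
multiplication and conjugate transposition, so `f(Q)ᴴ f(Q) = f(V) f(ΛᵀΛ) f(V)ᴴ` with `f(V)`
unitary. Since `ΛᵀΛ` is real diagonal, `f(ΛᵀΛ)` is the complex diagonal matrix repeating its
diagonal twice, so the characteristic polynomial of `f(Q)ᴴ f(Q)` is `∏ₖ (X - σₖ²)²`; its roots are
the eigenvalues of the Hermitian matrix `f(Q)ᴴ f(Q)`.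
-/

open Polynomial

lemma qC1_add (p q : Quaternion ℝ) : qC1 (p + q) = qC1 p + qC1 q := by
  apply Complex.ext <;> simp [qC1]

lemma qC2_add (p q : Quaternion ℝ) : qC2 (p + q) = qC2 p + qC2 q := by
  apply Complex.ext <;> simp [qC2]

lemma qC1_sum {ι : Type*} (s : Finset ι) (f : ι → Quaternion ℝ) :
    qC1 (∑ i ∈ s, f i) = ∑ i ∈ s, qC1 (f i) :=
  map_sum (AddMonoidHom.mk' qC1 qC1_add) f s

lemma qC2_sum {ι : Type*} (s : Finset ι) (f : ι → Quaternion ℝ) :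
    qC2 (∑ i ∈ s, f i) = ∑ i ∈ s, qC2 (f i) :=
  map_sum (AddMonoidHom.mk' qC2 qC2_add) f s

lemma qC1_mul (p q : Quaternion ℝ) :
    qC1 (p * q) = qC1 p * qC1 q - qC2 p * star (qC2 q) := by
  apply Complex.ext <;>
    simp only [qC1, qC2, Quaternion.re_mul, Quaternion.imI_mul, RCLike.star_def, Complex.sub_re,
      Complex.sub_im, Complex.mul_re, Complex.mul_im, Complex.conj_re, Complex.conj_im] <;>
    ring

lemma qC2_mul (p q : Quaternion ℝ) :
    qC2 (p * q) = qC1 p * qC2 q + qC2 p * star (qC1 q) := by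
  apply Complex.ext <;>
    simp only [qC1, qC2, Quaternion.imJ_mul, Quaternion.imK_mul, RCLike.star_def, Complex.add_re,
      Complex.add_im, Complex.mul_re, Complex.mul_im, Complex.conj_re, Complex.conj_im] <;>
    ring

lemma qC1_star (p : Quaternion ℝ) : qC1 (star p) = star (qC1 p) := by
  apply Complex.ext <;> simp [qC1]

lemma qC2_star (p : Quaternion ℝ) : qC2 (star p) = -qC2 p := by
  apply Complex.ext <;> simp [qC2]

lemma qC1_coe (r : ℝ) : qC1 r = r := by
  apply Complex.ext <;> simp [qC1]

lemma qC2_coe (r : ℝ) : qC2 r = 0 := by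
  apply Complex.ext <;> simp [qC2]

lemma qf_mul {N₁ N₂ N₃ : ℕ} (A : Matrix (Fin N₁) (Fin N₂) (Quaternion ℝ))
    (B : Matrix (Fin N₂) (Fin N₃) (Quaternion ℝ)) :
    qf (A * B) = qf A * qf B := by
  ext (m | m) (n | n) <;>
    simp only [qf, mul_apply, fromBlocks_apply₁₁, fromBlocks_apply₁₂, fromBlocks_apply₂₁,
      fromBlocks_apply₂₂, of_apply, Fintype.sum_sum_type, qC1_sum, qC2_sum, star_sum,
      ← Finset.sum_neg_distrib, ← Finset.sum_add_distrib] <;>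
    refine Finset.sum_congr rfl fun l _ => ?_ <;>
    simp only [qC1_mul, qC2_mul, star_sub, star_add, star_mul', star_star] <;>
    ring

lemma qf_conjTranspose {N₁ N₂ : ℕ} (A : Matrix (Fin N₁) (Fin N₂) (Quaternion ℝ)) :
    qf Aᴴ = (qf A)ᴴ := by
  ext (m | m) (n | n) <;> simp [qf, qC1_star, qC2_star]

lemma qf_rToQ_diagonal {N : ℕ} (d : Fin N → ℝ) :
    qf (rToQ (diagonal d)) =
      fromBlocks (diagonal fun k => (d k : ℂ)) 0 0 (diagonal fun k => (d k : ℂ)) := by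
  ext (m | m) (n | n) <;> by_cases h : m = n <;>
    simp [qf, rToQ, diagonal_apply, h, qC1_coe, qC2_coe]

lemma qf_one {N : ℕ} : qf (1 : Matrix (Fin N) (Fin N) (Quaternion ℝ)) = 1 := by
  have h1 : (1 : Matrix (Fin N) (Fin N) (Quaternion ℝ)) = rToQ (diagonal fun _ => 1) := by
    rw [diagonal_one, rToQ, Matrix.map_one _ (map_zero _) (map_one _)]
  rw [h1, qf_rToQ_diagonal]
  simp

lemma rToQ_conjTranspose {N₁ N₂ : ℕ} (Λ : Matrix (Fin N₁) (Fin N₂) ℝ) :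
    (rToQ Λ)ᴴ = rToQ Λᵀ := by
  ext m n <;> simp [rToQ, Quaternion.algebraMap_def]

lemma transpose_mul_self_eq_diagonal {N₁ N₂ : ℕ} {Λ : Matrix (Fin N₁) (Fin N₂) ℝ}
    (hΛ : ∀ (m : Fin N₁) (n : Fin N₂), (m : ℕ) ≠ (n : ℕ) → Λ m n = 0) :
    Λᵀ * Λ = diagonal fun k : Fin N₂ => (if h : (k : ℕ) < N₁ then Λ ⟨(k : ℕ), h⟩ k else 0) ^ 2 := by
  ext k l
  rw [mul_apply, diagonal_apply]
  split_ifs with hkl hk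
  · subst hkl
    rw [Finset.sum_eq_single ⟨k, hk⟩ (fun m _ hm => by rw [transpose_apply, hΛ m k
      (fun h => hm (Fin.ext h)), zero_mul]) (by simp), transpose_apply, sq]
  · rw [Finset.sum_eq_zero fun m _ => by rw [transpose_apply, hΛ m k (by omega), zero_mul]]
    simp
  · refine Finset.sum_eq_zero fun m _ => ?_
    by_cases hmk : (m : ℕ) = k
    · rw [hΛ m l (fun h => hkl (Fin.ext (hmk.symm.trans h))), mul_zero]
    · rw [transpose_apply, hΛ m k hmk, zero_mul]

lemma conjTranspose_mul_self_of_qsvd {N₁ N₂ : ℕ} {Q : Matrix (Fin N₁) (Fin N₂) (Quaternion ℝ)}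
    {U : Matrix (Fin N₁) (Fin N₁) (Quaternion ℝ)} {Λ : Matrix (Fin N₁) (Fin N₂) ℝ}
    {V : Matrix (Fin N₂) (Fin N₂) (Quaternion ℝ)} (hU : Uᴴ * U = 1) (hQ : Q = U * rToQ Λ * Vᴴ) :
    Qᴴ * Q = V * rToQ (Λᵀ * Λ) * Vᴴ := by
  have hΛ : rToQ (Λᵀ * Λ) = (rToQ Λ)ᴴ * rToQ Λ := by
    rw [rToQ_conjTranspose]; exact Matrix.map_mul
  rw [hQ, hΛ]
  simp only [conjTranspose_mul, conjTranspose_conjTranspose, Matrix.mul_assoc]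
  rw [← Matrix.mul_assoc Uᴴ, hU, Matrix.one_mul]

lemma Matrix.charpoly_mul_mul_of_mul_eq_one {n R : Type*} [Fintype n] [DecidableEq n] [CommRing R]
    {W B : Matrix n n R} (h : B * W = 1) (A : Matrix n n R) :
    (W * A * B).charpoly = A.charpoly := by
  rw [charpoly_mul_comm, ← Matrix.mul_assoc, h, Matrix.one_mul]

lemma Matrix.IsHermitian.eigenvalues_multiset_eq_of_charpoly_eq {𝕜 n : Type*} [RCLike 𝕜] [Fintype n]
    [DecidableEq n] {A : Matrix n n 𝕜} (hA : A.IsHermitian) {s : Multiset ℝ}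
    (h : A.charpoly = (s.map fun r : ℝ => X - C (r : 𝕜)).prod) :
    Finset.univ.val.map hA.eigenvalues = s := by
  have hroots := hA.roots_charpoly_eq_eigenvalues
  have hs : (s.map fun r : ℝ => X - C (r : 𝕜)) = (s.map RCLike.ofReal).map (X - C ·) := by
    rw [Multiset.map_map]; rfl
  rw [h, hs, roots_multiset_prod_X_sub_C, ← Multiset.map_map] at hroots
  exact (Multiset.map_injective RCLike.ofReal_injective hroots).symm

/-- the multiset of eigenvalues of `f(Q)ᴴ f(Q)` consists of the values `σ_k²`,
`k = 1, …, N₂` (the singular values of a QSVD, extended by zeros), each appearing twice. -/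
theorem qf_eigenvalues_of_qsvd {N₁ N₂ : ℕ} (Q : Matrix (Fin N₁) (Fin N₂) (Quaternion ℝ))
    (U : Matrix (Fin N₁) (Fin N₁) (Quaternion ℝ))
    (Λ : Matrix (Fin N₁) (Fin N₂) ℝ)
    (V : Matrix (Fin N₂) (Fin N₂) (Quaternion ℝ))
    (h : IsQSVD Q U Λ V) :
    (Finset.univ.val.map fun j =>
        (Matrix.isHermitian_conjTranspose_mul_self (qf Q)).eigenvalues j) =
      2 • (Finset.univ.val.map fun k : Fin N₂ =>
        (if h' : (k : ℕ) < N₁ then Λ ⟨(k : ℕ), h'⟩ k else 0) ^ 2) := by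
  obtain ⟨⟨-, hU⟩, ⟨-, hV⟩, ⟨hΛ, -⟩, hQ⟩ := h
  set d : Fin N₂ → ℝ := fun k => (if h' : (k : ℕ) < N₁ then Λ ⟨(k : ℕ), h'⟩ k else 0) ^ 2
  have hA : (qf Q)ᴴ * qf Q = qf V * qf (rToQ (diagonal d)) * (qf V)ᴴ := by
    rw [← qf_conjTranspose, ← qf_mul, conjTranspose_mul_self_of_qsvd hU hQ,
      transpose_mul_self_eq_diagonal hΛ, qf_mul, qf_mul, qf_conjTranspose]
  have hfV : (qf V)ᴴ * qf V = 1 := by rw [← qf_conjTranspose, ← qf_mul, hV, qf_one]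
  apply IsHermitian.eigenvalues_multiset_eq_of_charpoly_eq
  rw [hA, charpoly_mul_mul_of_mul_eq_one hfV,
    qf_rToQ_diagonal, charpoly_fromBlocks_zero₁₂, charpoly_diagonal, two_smul,
    Multiset.map_add, Multiset.prod_add, Finset.prod_eq_multiset_prod,
    Multiset.map_map]
  rfl
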